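/- Let 𝒜 be a bounded, irreducible family of subadditive, order-preserving, homogeneous maps on ℝⁿ_{≥0} with r̂(𝒜) = 1 (after scaling), and let ‖·‖ be a monotone norm on ℝⁿ. Then ‖x‖_* := sup_{f ∈ 𝒜*} ‖f(|x|)‖ defines a monotone norm on ℝⁿ which is extremal for 𝒜: ‖f(x)‖_* ≤ r̂(𝒜)‖x‖_* for all x ∈ ℝⁿ_{≥0} and f ∈ 𝒜. -/

import Mathlib

open Filter Topology Set

noncomputable section

/-- A wedge in a real normed space: a convex set closed under positive scalar multiplication. -/
def IsWedge {X : Type*} [NormedAddCommGroup X] [NormedSpace ℝ X] (W : Set X) : Prop :=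
  Convex ℝ W ∧ ∀ c : ℝ, 0 < c → ∀ x ∈ W, c • x ∈ W

/-- A closed cone: closed, convex, closed under positive scalar multiplication, K ∩ (−K) = {0}. -/
def IsClosedCone {X : Type*} [NormedAddCommGroup X] [NormedSpace ℝ X] (K : Set X) : Prop :=
  IsClosed K ∧ Convex ℝ K ∧ (∀ c : ℝ, 0 < c → ∀ x ∈ K, c • x ∈ K) ∧ K ∩ (-K) = {0}

/-- A polyhedral cone: intersection of finitely many closed halfspaces through the origin. -/
def IsPolyhedralCone {X : Type*} [NormedAddCommGroup X] [NormedSpace ℝ X] (K : Set X) : Prop :=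
  ∃ (k : ℕ) (φ : Fin k → (X →ₗ[ℝ] ℝ)), K = {x | ∀ i, 0 ≤ φ i x}

/-- `f` maps `W` into itself and is positively homogeneous on `W`. -/
def HomogOn {X : Type*} [NormedAddCommGroup X] [NormedSpace ℝ X] (f : X → X) (W : Set X) : Prop :=
  Set.MapsTo f W W ∧ ∀ c : ℝ, 0 < c → ∀ x ∈ W, f (c • x) = c • f x

/-- `f` is order-preserving with respect to the order induced by the cone `K`. -/
def OrderPresOn {X : Type*} [NormedAddCommGroup X] [NormedSpace ℝ X] (f : X → X) (K : Set X) : Prop :=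
  ∀ x ∈ K, ∀ y ∈ K, y - x ∈ K → f y - f x ∈ K

/-- `f` is subadditive on `K`: f(x+y) ≤ f(x)+f(y) in the cone order. -/
def SubaddOn {X : Type*} [NormedAddCommGroup X] [NormedSpace ℝ X] (f : X → X) (K : Set X) : Prop :=
  ∀ x ∈ K, ∀ y ∈ K, (f x + f y) - f (x + y) ∈ K

/-- The norm of a homogeneous map on `W`: sup of ‖f x‖ over unit vectors of `W`. -/
def opNormW {X : Type*} [NormedAddCommGroup X] (f : X → X) (W : Set X) : ℝ :=
  sSup ((fun x => ‖f x‖) '' {x ∈ W | ‖x‖ = 1})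

/-- A bounded homogeneous map on `W`. -/
def BoundedMapOn {X : Type*} [NormedAddCommGroup X] (f : X → X) (W : Set X) : Prop :=
  ∃ C : ℝ, ∀ x ∈ W, ‖f x‖ ≤ C * ‖x‖

/-- A bounded family of homogeneous maps on `W`. -/
def BoundedFamOn {X : Type*} [NormedAddCommGroup X] (A : Set (X → X)) (W : Set X) : Prop :=
  ∃ C : ℝ, ∀ f ∈ A, ∀ x ∈ W, ‖f x‖ ≤ C * ‖x‖

/-- `famPow A m` = 𝒜^m, the set of m-fold compositions of maps from `A` (with 𝒜^0 = {id}). -/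
def famPow {X : Type*} (A : Set (X → X)) : ℕ → Set (X → X)
  | 0 => {id}
  | m + 1 => {h | ∃ f ∈ A, ∃ g ∈ famPow A m, h = f ∘ g}

/-- The composition of two families of maps. -/
def compFam {X : Type*} (A B : Set (X → X)) : Set (X → X) :=
  {h | ∃ f ∈ A, ∃ g ∈ B, h = f ∘ g}

/-- The Bonsall cone spectral radius r(f) = inf_{n>0} ‖f^n‖^{1/n}. -/
def coneSpecRad {X : Type*} [NormedAddCommGroup X] (f : X → X) (W : Set X) : ℝ :=
  ⨅ n : ℕ+, (opNormW (f^[(n : ℕ)]) W) ^ (((n : ℕ) : ℝ)⁻¹)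

/-- sup_{f ∈ 𝒜^m} ‖f‖^{1/m}. -/
def jointTerm {X : Type*} [NormedAddCommGroup X] (A : Set (X → X)) (W : Set X) (m : ℕ) : ℝ :=
  sSup ((fun f => (opNormW f W) ^ ((m : ℝ)⁻¹)) '' famPow A m)

/-- sup_{f ∈ 𝒜^m} r(f)^{1/m}. -/
def genTerm {X : Type*} [NormedAddCommGroup X] (A : Set (X → X)) (W : Set X) (m : ℕ) : ℝ :=
  sSup ((fun f => (coneSpecRad f W) ^ ((m : ℝ)⁻¹)) '' famPow A m)

/-- The joint spectral radius r̂(𝒜) = inf_{m>0} sup_{f ∈ 𝒜^m} ‖f‖^{1/m}. -/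
def jointRad {X : Type*} [NormedAddCommGroup X] (A : Set (X → X)) (W : Set X) : ℝ :=
  ⨅ m : ℕ+, jointTerm A W (m : ℕ)

/-- The generalized spectral radius r(𝒜) = sup_{m>0} sup_{f ∈ 𝒜^m} r(f)^{1/m}. -/
def genRad {X : Type*} [NormedAddCommGroup X] (A : Set (X → X)) (W : Set X) : ℝ :=
  ⨆ m : ℕ+, genTerm A W (m : ℕ)

/-- β_m = inf_{f ∈ 𝒜^m} ‖f‖. -/
def subBeta {X : Type*} [NormedAddCommGroup X] (A : Set (X → X)) (W : Set X) (m : ℕ) : ℝ :=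
  sInf ((fun f => opNormW f W) '' famPow A m)

/-- γ_m = inf_{f ∈ 𝒜^m} r(f). -/
def subGamma {X : Type*} [NormedAddCommGroup X] (A : Set (X → X)) (W : Set X) (m : ℕ) : ℝ :=
  sInf ((fun f => coneSpecRad f W) '' famPow A m)

/-- F_m^d = f_m ∘ ⋯ ∘ f_1 for a sequence d of maps. -/
def seqComp {X : Type*} (d : ℕ → X → X) : ℕ → X → X
  | 0 => id
  | m + 1 => d m ∘ seqComp d m

/-- The standard cone ℝⁿ_{≥0}. -/
def stdCone (n : ℕ) : Set (Fin n → ℝ) := {x | ∀ i, 0 ≤ x i}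

/-- The closed face F_J of the standard cone. -/
def stdFace {n : ℕ} (J : Set (Fin n)) : Set (Fin n → ℝ) :=
  {x | (∀ i, 0 ≤ x i) ∧ ∀ i ∉ J, x i = 0}

/-- A family of maps on ℝⁿ_{≥0} is irreducible if no non-trivial closed face is invariant
under every member of the family. -/
def IrreducibleFam {n : ℕ} (A : Set ((Fin n → ℝ) → Fin n → ℝ)) : Prop :=
  ¬ ∃ J : Set (Fin n), J.Nonempty ∧ J ≠ Set.univ ∧ ∀ f ∈ A, Set.MapsTo f (stdFace J) (stdFace J)

/-- ‖x‖_* = sup_{f ∈ 𝒜*} ν(f(|x|)). -/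
def nuStar {n : ℕ} (A : Set ((Fin n → ℝ) → Fin n → ℝ)) (ν : (Fin n → ℝ) → ℝ) :
    (Fin n → ℝ) → ℝ :=
  fun x => sSup ((fun f => ν (f (fun i => |x i|))) '' ⋃ m, famPow A m)

/-!
Everything reduces to the boundedness of the orbits `{g x | g ∈ 𝒜*}` of the points `x ≥ 0`:
given that, each norm axiom and the monotonicity of `‖·‖_*` hold for every term `‖g |x|‖` of the
supremum, and extremality holds because `g ∘ f ∈ 𝒜*` for `g ∈ 𝒜*`, `f ∈ 𝒜`.

For the boundedness, the coordinates `i` whose unit vector `eᵢ` has a bounded orbit span a face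
invariant under `𝒜`, so by irreducibility either all of them or none of them do. In the first case
every `x ≥ 0` has a bounded orbit by subadditivity. In the second, there is a fixed `M` such that
the norm of every `y ≥ 0` is at least doubled by some word of length at most `M`, so words of length
at most `k M` multiply the norm by `2ᵏ`. This contradicts the growth bound `‖g‖ ≤ K ρᵐ` on `𝒜ᵐ`,
valid for every `ρ > r̂(𝒜) = 1`, once `ρ ^ M < 2`.
-/

section SubaddMonoHom

variable {E : Type*} [AddCommGroup E] [PartialOrder E] [Module ℝ E]

structure IsSubaddMonoHom (f : E → E) : Prop where
  map_nonneg : ∀ x, 0 ≤ x → 0 ≤ f x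
  map_smul : ∀ c : ℝ, 0 < c → ∀ x, 0 ≤ x → f (c • x) = c • f x
  mono : ∀ x y, 0 ≤ x → x ≤ y → f x ≤ f y
  map_add_le : ∀ x y, 0 ≤ x → 0 ≤ y → f (x + y) ≤ f x + f y

namespace IsSubaddMonoHom

variable {f g : E → E}

protected lemma id : IsSubaddMonoHom (id : E → E) :=
  ⟨fun _ hx => hx, fun _ _ _ _ => rfl, fun _ _ _ h => h, fun _ _ _ _ => le_rfl⟩

protected lemma comp [IsOrderedAddMonoid E] (hf : IsSubaddMonoHom f) (hg : IsSubaddMonoHom g) :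
    IsSubaddMonoHom (f ∘ g) where
  map_nonneg x hx := hf.map_nonneg _ (hg.map_nonneg x hx)
  map_smul c hc x hx := by
    simp only [Function.comp_apply, hg.map_smul c hc x hx, hf.map_smul c hc _ (hg.map_nonneg x hx)]
  mono x y hx hxy := hf.mono _ _ (hg.map_nonneg x hx) (hg.mono x y hx hxy)
  map_add_le x y hx hy :=
    calc f (g (x + y)) ≤ f (g x + g y) :=
          hf.mono _ _ (hg.map_nonneg _ (add_nonneg hx hy)) (hg.map_add_le x y hx hy)
      _ ≤ f (g x) + f (g y) := hf.map_add_le _ _ (hg.map_nonneg x hx) (hg.map_nonneg y hy)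

lemma map_zero (hf : IsSubaddMonoHom f) : f 0 = 0 := by
  have h := hf.map_smul 2 two_pos 0 le_rfl
  rwa [smul_zero, two_smul, left_eq_add] at h

lemma map_smul_of_nonneg (hf : IsSubaddMonoHom f) {c : ℝ} (hc : 0 ≤ c) {x : E} (hx : 0 ≤ x) :
    f (c • x) = c • f x := by
  rcases hc.eq_or_lt with rfl | hc
  · simp only [zero_smul, hf.map_zero]
  · exact hf.map_smul c hc x hx

end IsSubaddMonoHom

end SubaddMonoHom

lemma isSubaddMonoHom_of_stdCone {n : ℕ} {f : (Fin n → ℝ) → Fin n → ℝ}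
    (h : HomogOn f (stdCone n) ∧ OrderPresOn f (stdCone n) ∧ SubaddOn f (stdCone n)) :
    IsSubaddMonoHom f where
  map_nonneg _ hx := h.1.1 hx
  map_smul c hc x hx := h.1.2 c hc x hx
  mono x y hx hxy := sub_nonneg.1 (h.2.1 x hx y (hx.trans hxy) (sub_nonneg.2 hxy))
  map_add_le x y hx hy := sub_nonneg.1 (h.2.2 x hx y hy)

section FamPow

variable {X : Type*} {A : Set (X → X)}

lemma id_mem_famPow_zero : (id : X → X) ∈ famPow A 0 := rfl

lemma mem_famPow_one {f : X → X} (hf : f ∈ A) : f ∈ famPow A 1 :=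
  ⟨f, hf, id, id_mem_famPow_zero, rfl⟩

lemma comp_mem_famPow_add {a b : ℕ} {g h : X → X} (hg : g ∈ famPow A a) (hh : h ∈ famPow A b) :
    g ∘ h ∈ famPow A (a + b) := by
  induction a generalizing g with
  | zero =>
    obtain rfl : g = id := hg
    simpa using hh
  | succ a ih =>
    obtain ⟨f, hf, g', hg', rfl⟩ := hg
    rw [Nat.add_right_comm]
    exact ⟨f, hf, g' ∘ h, ih hg', rfl⟩

lemma exists_comp_of_mem_famPow_add {a b : ℕ} {g : X → X} (hg : g ∈ famPow A (a + b)) :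
    ∃ g₁ ∈ famPow A a, ∃ g₂ ∈ famPow A b, g = g₁ ∘ g₂ := by
  induction a generalizing g with
  | zero => exact ⟨id, id_mem_famPow_zero, g, by simpa using hg, rfl⟩
  | succ a ih =>
    rw [Nat.add_right_comm] at hg
    obtain ⟨f, hf, g', hg', rfl⟩ := hg
    obtain ⟨g₁, hg₁, g₂, hg₂, rfl⟩ := ih hg'
    exact ⟨f ∘ g₁, ⟨f, hf, g₁, hg₁, rfl⟩, g₂, hg₂, rfl⟩

def famStar (A : Set (X → X)) : Set (X → X) := ⋃ m, famPow A m

lemma id_mem_famStar : (id : X → X) ∈ famStar A := mem_iUnion.2 ⟨0, id_mem_famPow_zero⟩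

lemma comp_mem_famStar {f g : X → X} (hg : g ∈ famStar A) (hf : f ∈ A) : g ∘ f ∈ famStar A :=
  (mem_iUnion.1 hg).elim fun m hm =>
    mem_iUnion.2 ⟨m + 1, comp_mem_famPow_add hm (mem_famPow_one hf)⟩

lemma isSubaddMonoHom_of_mem_famPow [AddCommGroup X] [PartialOrder X] [IsOrderedAddMonoid X]
    [Module ℝ X] (hA : ∀ f ∈ A, IsSubaddMonoHom f) {m : ℕ} {g : X → X} (hg : g ∈ famPow A m) :
    IsSubaddMonoHom g := by
  induction m generalizing g with
  | zero =>
    obtain rfl : g = id := hg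
    exact IsSubaddMonoHom.id
  | succ m ih =>
    obtain ⟨f, hf, g', hg', rfl⟩ := hg
    exact (hA f hf).comp (ih hg')

lemma isSubaddMonoHom_of_mem_famStar [AddCommGroup X] [PartialOrder X] [IsOrderedAddMonoid X]
    [Module ℝ X] (hA : ∀ f ∈ A, IsSubaddMonoHom f) {g : X → X} (hg : g ∈ famStar A) :
    IsSubaddMonoHom g :=
  (mem_iUnion.1 hg).elim fun _ hm => isSubaddMonoHom_of_mem_famPow hA hm

end FamPow

section Orbits

variable {ι : Type*} [Fintype ι] {A : Set ((ι → ℝ) → ι → ℝ)}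

lemma pi_norm_le_pi_norm_of_nonneg_of_le {x y : ι → ℝ} (hx : 0 ≤ x) (hxy : x ≤ y) :
    ‖x‖ ≤ ‖y‖ := by
  refine (pi_norm_le_iff_of_nonneg (norm_nonneg y)).2 fun i => ?_
  rw [Real.norm_of_nonneg (hx i)]
  exact (hxy i).trans ((le_abs_self _).trans (norm_le_pi_norm y i))

lemma norm_le_pow_mul_of_mem_famPow (hA : ∀ f ∈ A, IsSubaddMonoHom f) {C : ℝ} (hC0 : 0 ≤ C)
    (hC : ∀ f ∈ A, ∀ x, 0 ≤ x → ‖f x‖ ≤ C * ‖x‖) {m : ℕ} {g : (ι → ℝ) → ι → ℝ}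
    (hg : g ∈ famPow A m) {x : ι → ℝ} (hx : 0 ≤ x) : ‖g x‖ ≤ C ^ m * ‖x‖ := by
  induction m generalizing g with
  | zero =>
    obtain rfl : g = id := hg
    simp
  | succ m ih =>
    obtain ⟨f, hf, g', hg', rfl⟩ := hg
    calc ‖f (g' x)‖ ≤ C * ‖g' x‖ :=
          hC f hf _ ((isSubaddMonoHom_of_mem_famPow hA hg').map_nonneg x hx)
      _ ≤ C * (C ^ m * ‖x‖) := mul_le_mul_of_nonneg_left (ih hg') hC0
      _ = C ^ (m + 1) * ‖x‖ := by ring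

def BddOrbit (A : Set ((ι → ℝ) → ι → ℝ)) (x : ι → ℝ) : Prop :=
  ∃ B : ℝ, ∀ g ∈ famStar A, ‖g x‖ ≤ B

namespace BddOrbit

lemma zero (hA : ∀ f ∈ A, IsSubaddMonoHom f) : BddOrbit A 0 :=
  ⟨0, fun _ hg => by rw [(isSubaddMonoHom_of_mem_famStar hA hg).map_zero, norm_zero]⟩

lemma mono (hA : ∀ f ∈ A, IsSubaddMonoHom f) {x y : ι → ℝ} (hx : 0 ≤ x) (hxy : x ≤ y)
    (hy : BddOrbit A y) : BddOrbit A x := by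
  obtain ⟨B, hB⟩ := hy
  refine ⟨B, fun g hg => le_trans ?_ (hB g hg)⟩
  have hg' := isSubaddMonoHom_of_mem_famStar hA hg
  exact pi_norm_le_pi_norm_of_nonneg_of_le (hg'.map_nonneg x hx) (hg'.mono x y hx hxy)

lemma smul (hA : ∀ f ∈ A, IsSubaddMonoHom f) {c : ℝ} (hc : 0 ≤ c) {x : ι → ℝ} (hx : 0 ≤ x)
    (h : BddOrbit A x) : BddOrbit A (c • x) := by
  obtain ⟨B, hB⟩ := h
  refine ⟨c * B, fun g hg => ?_⟩
  rw [(isSubaddMonoHom_of_mem_famStar hA hg).map_smul_of_nonneg hc hx, norm_smul,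
    Real.norm_of_nonneg hc]
  exact mul_le_mul_of_nonneg_left (hB g hg) hc

lemma add (hA : ∀ f ∈ A, IsSubaddMonoHom f) {x y : ι → ℝ} (hx : 0 ≤ x) (hy : 0 ≤ y)
    (hbx : BddOrbit A x) (hby : BddOrbit A y) : BddOrbit A (x + y) := by
  obtain ⟨B, hB⟩ := hbx
  obtain ⟨B', hB'⟩ := hby
  refine ⟨B + B', fun g hg => ?_⟩
  have hg' := isSubaddMonoHom_of_mem_famStar hA hg
  calc ‖g (x + y)‖ ≤ ‖g x + g y‖ :=
        pi_norm_le_pi_norm_of_nonneg_of_le (hg'.map_nonneg _ (add_nonneg hx hy))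
          (hg'.map_add_le x y hx hy)
    _ ≤ ‖g x‖ + ‖g y‖ := norm_add_le _ _
    _ ≤ B + B' := add_le_add (hB g hg) (hB' g hg)

lemma map {f : (ι → ℝ) → ι → ℝ} (hf : f ∈ A) {x : ι → ℝ}
    (h : BddOrbit A x) : BddOrbit A (f x) := by
  obtain ⟨B, hB⟩ := h
  exact ⟨B, fun g hg => hB (g ∘ f) (comp_mem_famStar hg hf)⟩

end BddOrbit

variable [DecidableEq ι]

lemma bddOrbit_of_forall_single (hA : ∀ f ∈ A, IsSubaddMonoHom f) {x : ι → ℝ} (hx : 0 ≤ x)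
    (h : ∀ i, x i ≠ 0 → BddOrbit A (Pi.single i 1)) : BddOrbit A x := by
  have hsingle : ∀ i, 0 ≤ (Pi.single i (x i) : ι → ℝ) := fun i => Pi.single_nonneg.2 (hx i)
  have hsum : ∀ s : Finset ι, BddOrbit A (∑ i ∈ s, Pi.single i (x i)) := by
    intro s
    induction s using Finset.induction_on with
    | empty => simpa using BddOrbit.zero hA
    | insert a s ha ih =>
      rw [Finset.sum_insert ha]
      refine BddOrbit.add hA (hsingle a) (Finset.sum_nonneg fun i _ => hsingle i) ?_ ih
      by_cases hxa : x a = 0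
      · simpa [hxa] using BddOrbit.zero hA
      · simpa [← Pi.single_smul'] using
          BddOrbit.smul hA (hx a) (Pi.single_nonneg.2 zero_le_one) (h a hxa)
  simpa only [Finset.univ_sum_single] using hsum Finset.univ

lemma bddOrbit_single_of_bddOrbit (hA : ∀ f ∈ A, IsSubaddMonoHom f) {x : ι → ℝ} (hx : 0 ≤ x)
    {i : ι} (hxi : 0 < x i) (h : BddOrbit A x) : BddOrbit A (Pi.single i 1) := by
  refine BddOrbit.mono hA (Pi.single_nonneg.2 zero_le_one) ?_
    (BddOrbit.smul hA (inv_nonneg.2 hxi.le) hx h)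
  intro j
  rcases eq_or_ne j i with rfl | hji
  · simp [hxi.ne']
  · simpa [hji] using mul_nonneg (inv_nonneg.2 hxi.le) (hx j)

end Orbits

section Doubling

variable {ι : Type*} [Fintype ι] {A : Set ((ι → ℝ) → ι → ℝ)}

lemma exists_uniform_doubling [DecidableEq ι] (hA : ∀ f ∈ A, IsSubaddMonoHom f)
    (h : ∀ i, ¬ BddOrbit A (Pi.single i 1)) :
    ∃ M, ∀ y : ι → ℝ, 0 ≤ y → ∃ m ≤ M, ∃ g ∈ famPow A m, 2 * ‖y‖ ≤ ‖g y‖ := by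
  have hunb : ∀ i, ∃ m, ∃ g ∈ famPow A m, 2 < ‖g (Pi.single i 1)‖ := by
    intro i
    by_contra hi
    push Not at hi
    exact h i ⟨2, fun g hg => (mem_iUnion.1 hg).elim fun m hm => hi m g hm⟩
  choose m g hg hg2 using hunb
  refine ⟨Finset.univ.sup m, fun y hy => ?_⟩
  cases isEmpty_or_nonempty ι
  · exact ⟨0, Nat.zero_le _, id, id_mem_famPow_zero, by simp [Subsingleton.elim y 0]⟩
  -- the sup norm of `y` is attained at a coordinate `i`, so `y` dominates `‖y‖ • eᵢ`
  obtain ⟨i, hi⟩ := Finite.exists_max y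
  have hyi : ‖y‖ ≤ y i := (pi_norm_le_iff_of_nonneg (hy i)).2 fun j => by
    rw [Real.norm_of_nonneg (hy j)]
    exact hi j
  have hle : y i • (Pi.single i 1 : ι → ℝ) ≤ y := by
    intro j
    rcases eq_or_ne j i with rfl | hji
    · simp
    · simpa [hji] using hy j
  have hgi := isSubaddMonoHom_of_mem_famPow hA (hg i)
  have hei : (0 : ι → ℝ) ≤ Pi.single i 1 := Pi.single_nonneg.2 zero_le_one
  refine ⟨m i, Finset.le_sup (Finset.mem_univ i), g i, hg i, ?_⟩
  calc 2 * ‖y‖ ≤ y i * ‖g i (Pi.single i 1)‖ := by nlinarith [norm_nonneg y, hg2 i]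
    _ = ‖g i (y i • Pi.single i 1)‖ := by
      rw [hgi.map_smul_of_nonneg (hy i) hei, norm_smul, Real.norm_of_nonneg (hy i)]
    _ ≤ ‖g i y‖ := pi_norm_le_pi_norm_of_nonneg_of_le
      (hgi.map_nonneg _ (smul_nonneg (hy i) hei)) (hgi.mono _ _ (smul_nonneg (hy i) hei) hle)

lemma exists_two_pow_mul_norm_le (hA : ∀ f ∈ A, IsSubaddMonoHom f) {M : ℕ}
    (hM : ∀ y : ι → ℝ, 0 ≤ y → ∃ m ≤ M, ∃ g ∈ famPow A m, 2 * ‖y‖ ≤ ‖g y‖)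
    {y : ι → ℝ} (hy : 0 ≤ y) (k : ℕ) :
    ∃ m ≤ k * M, ∃ g ∈ famPow A m, 2 ^ k * ‖y‖ ≤ ‖g y‖ := by
  induction k with
  | zero => exact ⟨0, by simp, id, id_mem_famPow_zero, by simp⟩
  | succ k ih =>
    obtain ⟨m, hm, g, hg, hgy⟩ := ih
    obtain ⟨m', hm', g', hg', hg'y⟩ :=
      hM (g y) ((isSubaddMonoHom_of_mem_famPow hA hg).map_nonneg y hy)
    refine ⟨m' + m, by rw [Nat.succ_mul]; omega, g' ∘ g, comp_mem_famPow_add hg' hg, ?_⟩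
    calc 2 ^ (k + 1) * ‖y‖ = 2 * (2 ^ k * ‖y‖) := by ring
      _ ≤ 2 * ‖g y‖ := by linarith
      _ ≤ ‖g' (g y)‖ := hg'y

end Doubling

section OpNormW

variable {X : Type*} [NormedAddCommGroup X] {f : X → X} {W : Set X} {B : ℝ}

lemma opNormW_nonneg : 0 ≤ opNormW f W :=
  Real.sSup_nonneg (by rintro _ ⟨x, -, rfl⟩; exact norm_nonneg _)

lemma opNormW_le (hB0 : 0 ≤ B) (hB : ∀ x ∈ W, ‖f x‖ ≤ B * ‖x‖) : opNormW f W ≤ B :=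
  Real.sSup_le (by rintro _ ⟨x, ⟨hxW, hx1⟩, rfl⟩; simpa [hx1] using hB x hxW) hB0

lemma norm_le_opNormW_mul [NormedSpace ℝ X] (hW : ∀ c : ℝ, 0 < c → ∀ x ∈ W, c • x ∈ W)
    (hf : ∀ c : ℝ, 0 < c → ∀ x ∈ W, f (c • x) = c • f x) (hB : ∀ x ∈ W, ‖f x‖ ≤ B * ‖x‖)
    {x : X} (hx : x ∈ W) : ‖f x‖ ≤ opNormW f W * ‖x‖ := by
  rcases eq_or_ne x 0 with rfl | hx0
  · simpa using hB 0 hx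
  have hn : 0 < ‖x‖ := norm_pos_iff.2 hx0
  have hzW : ‖x‖⁻¹ • x ∈ W := hW _ (inv_pos.2 hn) x hx
  have hz1 : ‖‖x‖⁻¹ • x‖ = 1 := by rw [norm_smul, norm_inv, norm_norm, inv_mul_cancel₀ hn.ne']
  have hbdd : BddAbove ((fun x => ‖f x‖) '' {x ∈ W | ‖x‖ = 1}) :=
    ⟨B, by rintro _ ⟨y, ⟨hyW, hy1⟩, rfl⟩; simpa [hy1] using hB y hyW⟩
  have hfz : ‖f (‖x‖⁻¹ • x)‖ ≤ opNormW f W := le_csSup hbdd ⟨_, ⟨hzW, hz1⟩, rfl⟩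
  have hfx : f x = ‖x‖ • f (‖x‖⁻¹ • x) := by
    rw [← hf _ hn _ hzW, smul_smul, mul_inv_cancel₀ hn.ne', one_smul]
  calc ‖f x‖ = ‖x‖ * ‖f (‖x‖⁻¹ • x)‖ := by rw [hfx, norm_smul, norm_norm]
    _ ≤ opNormW f W * ‖x‖ := by rw [mul_comm]; exact mul_le_mul_of_nonneg_right hfz hn.le

end OpNormW

section Growth

variable {n : ℕ} {A : Set ((Fin n → ℝ) → Fin n → ℝ)}

lemma norm_le_pow_mul_of_jointTerm_le (hA : ∀ f ∈ A, IsSubaddMonoHom f) {C : ℝ} (hC0 : 0 ≤ C)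
    (hC : ∀ f ∈ A, ∀ x, 0 ≤ x → ‖f x‖ ≤ C * ‖x‖) {m : ℕ} (hm : m ≠ 0) {ρ : ℝ}
    (hρ : jointTerm A (stdCone n) m ≤ ρ) {g : (Fin n → ℝ) → Fin n → ℝ} (hg : g ∈ famPow A m)
    {x : Fin n → ℝ} (hx : 0 ≤ x) : ‖g x‖ ≤ ρ ^ m * ‖x‖ := by
  have hopC : ∀ h ∈ famPow A m, opNormW h (stdCone n) ≤ C ^ m := fun h hh =>
    opNormW_le (pow_nonneg hC0 m) fun y hy => norm_le_pow_mul_of_mem_famPow hA hC0 hC hh hy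
  have hroot : opNormW g (stdCone n) ^ (m : ℝ)⁻¹ ≤ ρ := by
    have hbdd : BddAbove ((fun h => opNormW h (stdCone n) ^ (m : ℝ)⁻¹) '' famPow A m) := by
      refine ⟨(C ^ m) ^ (m : ℝ)⁻¹, ?_⟩
      rintro _ ⟨h, hh, rfl⟩
      exact Real.rpow_le_rpow opNormW_nonneg (hopC h hh) (by positivity)
    exact (le_csSup hbdd ⟨g, hg, rfl⟩).trans hρ
  have hop : opNormW g (stdCone n) ≤ ρ ^ m := by
    rw [← Real.rpow_inv_natCast_pow opNormW_nonneg hm]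
    exact pow_le_pow_left₀ (Real.rpow_nonneg opNormW_nonneg _) hroot m
  have hg' := isSubaddMonoHom_of_mem_famPow hA hg
  calc ‖g x‖ ≤ opNormW g (stdCone n) * ‖x‖ :=
        norm_le_opNormW_mul (fun c hc y hy => smul_nonneg hc.le hy) hg'.map_smul
          (fun y hy => norm_le_pow_mul_of_mem_famPow hA hC0 hC hg hy) hx
    _ ≤ ρ ^ m * ‖x‖ := mul_le_mul_of_nonneg_right hop (norm_nonneg x)

lemma norm_le_mul_pow_of_jointTerm_le (hA : ∀ f ∈ A, IsSubaddMonoHom f) {C : ℝ} (hC1 : 1 ≤ C)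
    (hC : ∀ f ∈ A, ∀ x, 0 ≤ x → ‖f x‖ ≤ C * ‖x‖) {m₀ : ℕ} (hm₀ : m₀ ≠ 0) {ρ : ℝ} (hρ1 : 1 ≤ ρ)
    (hρ : jointTerm A (stdCone n) m₀ ≤ ρ) (m : ℕ) :
    ∀ g ∈ famPow A m, ∀ x, 0 ≤ x → ‖g x‖ ≤ C ^ m₀ * ρ ^ m * ‖x‖ := by
  have hρ0 : 0 ≤ ρ := zero_le_one.trans hρ1
  induction m using Nat.strong_induction_on with
  | h m ih =>
    intro g hg x hx
    rcases lt_or_ge m m₀ with hm | hm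
    · calc ‖g x‖ ≤ C ^ m * ‖x‖ := norm_le_pow_mul_of_mem_famPow hA (zero_le_one.trans hC1) hC hg hx
        _ ≤ C ^ m₀ * ρ ^ m * ‖x‖ := by
          gcongr
          exact (pow_le_pow_right₀ hC1 hm.le).trans
            (le_mul_of_one_le_right (by positivity) (one_le_pow₀ hρ1))
    · obtain ⟨g₁, hg₁, g₂, hg₂, rfl⟩ :=
        exists_comp_of_mem_famPow_add (a := m₀) (b := m - m₀) (by rwa [Nat.add_sub_cancel' hm])
      have hg₂x := (isSubaddMonoHom_of_mem_famPow hA hg₂).map_nonneg x hx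
      calc ‖g₁ (g₂ x)‖ ≤ ρ ^ m₀ * ‖g₂ x‖ :=
            norm_le_pow_mul_of_jointTerm_le hA (zero_le_one.trans hC1) hC hm₀ hρ hg₁ hg₂x
        _ ≤ ρ ^ m₀ * (C ^ m₀ * ρ ^ (m - m₀) * ‖x‖) :=
          mul_le_mul_of_nonneg_left (ih _ (by omega) g₂ hg₂ x hx) (pow_nonneg hρ0 _)
        _ = C ^ m₀ * ρ ^ m * ‖x‖ := by
          conv_rhs => rw [← Nat.add_sub_cancel' hm, pow_add]
          ring

lemma exists_norm_le_mul_pow_of_jointRad_lt (hA : ∀ f ∈ A, IsSubaddMonoHom f)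
    (hbdd : BoundedFamOn A (stdCone n)) {ρ : ℝ} (hρ1 : 1 ≤ ρ) (hρ : jointRad A (stdCone n) < ρ) :
    ∃ K, 0 ≤ K ∧ ∀ m, ∀ g ∈ famPow A m, ∀ x, 0 ≤ x → ‖g x‖ ≤ K * ρ ^ m * ‖x‖ := by
  obtain ⟨C, hC⟩ := hbdd
  obtain ⟨m₀, hm₀⟩ := exists_lt_of_ciInf_lt hρ
  refine ⟨max C 1 ^ (m₀ : ℕ), by positivity, norm_le_mul_pow_of_jointTerm_le hA (le_max_right C 1)
    (fun f hf x hx => ?_) m₀.ne_zero hρ1 hm₀.le⟩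
  exact (hC f hf x hx).trans (mul_le_mul_of_nonneg_right (le_max_left C 1) (norm_nonneg x))

end Growth

lemma exists_one_lt_pow_lt (M : ℕ) {a : ℝ} (ha : 1 < a) : ∃ ρ : ℝ, 1 < ρ ∧ ρ ^ M < a := by
  have h : ∀ᶠ ρ in 𝓝[>] (1 : ℝ), ρ ^ M < a := nhdsWithin_le_nhds <|
    (continuous_pow M).continuousAt.eventually_lt continuousAt_const (by simpa using ha)
  obtain ⟨ρ, hρM, hρ1⟩ := (h.and self_mem_nhdsWithin).exists
  exact ⟨ρ, hρ1, hρM⟩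

section Irreducible

variable {n : ℕ} {A : Set ((Fin n → ℝ) → Fin n → ℝ)}

lemma mapsTo_stdFace_bddOrbit (hA : ∀ f ∈ A, IsSubaddMonoHom f) {f : (Fin n → ℝ) → Fin n → ℝ}
    (hf : f ∈ A) :
    MapsTo f (stdFace {i | BddOrbit A (Pi.single i 1)})
      (stdFace {i | BddOrbit A (Pi.single i 1)}) := by
  rintro x ⟨hx, hxJ⟩
  have hfx : 0 ≤ f x := (hA f hf).map_nonneg x hx
  have hbfx : BddOrbit A (f x) :=
    (bddOrbit_of_forall_single hA hx fun i hxi => not_not.1 (mt (hxJ i) hxi)).map hf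
  refine ⟨hfx, fun i hi => ?_⟩
  by_contra hne
  exact hi (bddOrbit_single_of_bddOrbit hA hfx ((hfx i).lt_of_ne' hne) hbfx)

lemma bddOrbit_single_all_or_none (hA : ∀ f ∈ A, IsSubaddMonoHom f) (hirr : IrreducibleFam A) :
    (∀ i, BddOrbit A (Pi.single i 1)) ∨ ∀ i, ¬ BddOrbit A (Pi.single i 1) := by
  by_contra h
  push Not at h
  obtain ⟨⟨i, hi⟩, j, hj⟩ := h
  exact hirr ⟨{i | BddOrbit A (Pi.single i 1)}, ⟨j, hj⟩, fun hJ => hi (eq_univ_iff_forall.1 hJ i),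
    fun f hf => mapsTo_stdFace_bddOrbit hA hf⟩

theorem bddOrbit_of_irreducible (hA : ∀ f ∈ A, IsSubaddMonoHom f)
    (hbdd : BoundedFamOn A (stdCone n)) (hirr : IrreducibleFam A)
    (hr : jointRad A (stdCone n) ≤ 1) {x : Fin n → ℝ} (hx : 0 ≤ x) : BddOrbit A x := by
  by_cases hall : ∀ i, BddOrbit A (Pi.single i 1)
  · exact bddOrbit_of_forall_single hA hx fun i _ => hall i
  exfalso
  push Not at hall
  obtain ⟨i₀, hi₀⟩ := hall
  have hnone := (bddOrbit_single_all_or_none hA hirr).resolve_left fun h => hi₀ (h i₀)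
  obtain ⟨M, hM⟩ := exists_uniform_doubling hA hnone
  obtain ⟨ρ, hρ1, hρM⟩ := exists_one_lt_pow_lt M one_lt_two
  obtain ⟨K, hK0, hK⟩ :=
    exists_norm_le_mul_pow_of_jointRad_lt hA hbdd hρ1.le (hr.trans_lt hρ1)
  have hu : (0 : Fin n → ℝ) ≤ Pi.single i₀ 1 := Pi.single_nonneg.2 zero_le_one
  have hu1 : ‖(Pi.single i₀ 1 : Fin n → ℝ)‖ = 1 := by rw [Pi.norm_single, norm_one]
  have hgrowth : ∀ k : ℕ, (2 / ρ ^ M) ^ k ≤ K := fun k => by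
    obtain ⟨m, hm, g, hg, h2⟩ := exists_two_pow_mul_norm_le hA hM hu k
    have := h2.trans (hK m g hg _ hu)
    rw [hu1, mul_one, mul_one] at this
    rw [div_pow, div_le_iff₀ (by positivity), ← pow_mul, mul_comm M k]
    exact this.trans (mul_le_mul_of_nonneg_left (pow_le_pow_right₀ hρ1.le hm) hK0)
  obtain ⟨k, hk⟩ := pow_unbounded_of_one_lt K ((one_lt_div (by positivity)).2 hρM)
  exact (hgrowth k).not_gt hk

end Irreducible

lemma exists_le_mul_norm_of_subadditive {ι : Type*} [Fintype ι] [DecidableEq ι]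
    {ν : (ι → ℝ) → ℝ} (hν1 : ∀ x y, ν (x + y) ≤ ν x + ν y)
    (hν2 : ∀ (c : ℝ) (x), ν (c • x) = |c| * ν x) (hν4 : ∀ x, 0 ≤ ν x) :
    ∃ K, 0 ≤ K ∧ ∀ y, ν y ≤ K * ‖y‖ := by
  have hν0 : ν 0 = 0 := by simpa using hν2 0 0
  refine ⟨∑ i, ν (Pi.single i 1), Finset.sum_nonneg fun i _ => hν4 _, fun y => ?_⟩
  calc ν y = ν (∑ i, Pi.single i (y i)) := by rw [Finset.univ_sum_single]
    _ ≤ ∑ i, ν (Pi.single i (y i)) := Finset.le_sum_of_subadditive ν hν0.le hν1 _ _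
    _ ≤ ∑ i, ‖y‖ * ν (Pi.single i 1) := Finset.sum_le_sum fun i _ => by
      rw [← mul_one (y i), ← smul_eq_mul, Pi.single_smul', hν2, ← Real.norm_eq_abs]
      exact mul_le_mul_of_nonneg_right (norm_le_pi_norm y i) (hν4 _)
    _ = (∑ i, ν (Pi.single i 1)) * ‖y‖ := by rw [Finset.sum_mul]; simp only [mul_comm]

lemma bddAbove_image_of_bddOrbit {ι : Type*} [Fintype ι] {A : Set ((ι → ℝ) → ι → ℝ)}
    {ν : (ι → ℝ) → ℝ} {K : ℝ} (hK0 : 0 ≤ K) (hK : ∀ y, ν y ≤ K * ‖y‖) {x : ι → ℝ}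
    (hx : BddOrbit A x) : BddAbove ((fun g => ν (g x)) '' famStar A) := by
  obtain ⟨B, hB⟩ := hx
  refine ⟨K * B, ?_⟩
  rintro _ ⟨g, hg, rfl⟩
  exact (hK _).trans (mul_le_mul_of_nonneg_left (hB g hg) hK0)

section NuStar

variable {n : ℕ} {A : Set ((Fin n → ℝ) → Fin n → ℝ)} {ν : (Fin n → ℝ) → ℝ}

lemma nuStar_eq_sSup (x : Fin n → ℝ) :
    nuStar A ν x = sSup ((fun g => ν (g fun i => |x i|)) '' famStar A) :=
  rfl

lemma le_nuStar {x : Fin n → ℝ}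
    (hB : BddAbove ((fun g => ν (g fun i => |x i|)) '' famStar A))
    {g : (Fin n → ℝ) → Fin n → ℝ} (hg : g ∈ famStar A) :
    ν (g fun i => |x i|) ≤ nuStar A ν x :=
  le_csSup hB ⟨g, hg, rfl⟩

lemma nuStar_le {x : Fin n → ℝ} {c : ℝ}
    (h : ∀ g ∈ famStar A, ν (g fun i => |x i|) ≤ c) : nuStar A ν x ≤ c :=
  csSup_le ⟨_, id, id_mem_famStar, rfl⟩ (by rintro _ ⟨g, hg, rfl⟩; exact h g hg)

lemma nuStar_nonneg (hν4 : ∀ x, 0 ≤ ν x) (x : Fin n → ℝ) : 0 ≤ nuStar A ν x :=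
  Real.sSup_nonneg (by rintro _ ⟨g, -, rfl⟩; exact hν4 _)

open scoped Pointwise in
lemma nuStar_smul (hA : ∀ f ∈ A, IsSubaddMonoHom f)
    (hν2 : ∀ (c : ℝ) (x), ν (c • x) = |c| * ν x) (c : ℝ) (x : Fin n → ℝ) :
    nuStar A ν (c • x) = |c| * nuStar A ν x := by
  have habs : (fun i => |(c • x) i|) = |c| • fun i => |x i| := by
    ext i
    simp [abs_mul]
  have himage : (fun g => ν (g fun i => |(c • x) i|)) '' famStar A =
      |c| • ((fun g => ν (g fun i => |x i|)) '' famStar A) := by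
    rw [← Set.image_smul, Set.image_image]
    refine Set.image_congr fun g hg => ?_
    have hg' := isSubaddMonoHom_of_mem_famStar hA hg
    rw [habs, hg'.map_smul_of_nonneg (abs_nonneg c) fun i => abs_nonneg _, hν2, abs_abs,
      smul_eq_mul]
  rw [nuStar_eq_sSup, nuStar_eq_sSup, himage, Real.sSup_smul_of_nonneg (abs_nonneg c), smul_eq_mul]

lemma nuStar_add_le (hA : ∀ f ∈ A, IsSubaddMonoHom f)
    (hB : ∀ x : Fin n → ℝ, BddAbove ((fun g => ν (g fun i => |x i|)) '' famStar A))
    (hν1 : ∀ x y, ν (x + y) ≤ ν x + ν y)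
    (hν5 : ∀ x y : Fin n → ℝ, (∀ i, 0 ≤ x i) → (∀ i, x i ≤ y i) → ν x ≤ ν y)
    (x y : Fin n → ℝ) : nuStar A ν (x + y) ≤ nuStar A ν x + nuStar A ν y := by
  refine nuStar_le fun g hg => ?_
  have hg' := isSubaddMonoHom_of_mem_famStar hA hg
  have habs : ∀ z : Fin n → ℝ, 0 ≤ fun i => |z i| := fun z i => abs_nonneg (z i)
  calc ν (g fun i => |(x + y) i|) ≤ ν (g (fun i => |x i|) + g fun i => |y i|) :=
        hν5 _ _ (hg'.map_nonneg _ (habs _)) <|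
          (hg'.mono _ _ (habs _) fun i => abs_add_le (x i) (y i)).trans
            (hg'.map_add_le _ _ (habs x) (habs y))
    _ ≤ ν (g fun i => |x i|) + ν (g fun i => |y i|) := hν1 _ _
    _ ≤ nuStar A ν x + nuStar A ν y := add_le_add (le_nuStar (hB x) hg) (le_nuStar (hB y) hg)

lemma nuStar_eq_zero_iff (hA : ∀ f ∈ A, IsSubaddMonoHom f)
    (hB : ∀ x : Fin n → ℝ, BddAbove ((fun g => ν (g fun i => |x i|)) '' famStar A))
    (hν2 : ∀ (c : ℝ) (x), ν (c • x) = |c| * ν x) (hν3 : ∀ x, ν x = 0 ↔ x = 0)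
    (hν4 : ∀ x, 0 ≤ ν x) (x : Fin n → ℝ) : nuStar A ν x = 0 ↔ x = 0 := by
  refine ⟨fun h => ?_, ?_⟩
  · have hid : ν (fun i => |x i|) ≤ 0 :=
      h ▸ le_nuStar (hB x) id_mem_famStar
    have habs := (hν3 _).1 (le_antisymm hid (hν4 _))
    funext i
    exact abs_eq_zero.1 (congrFun habs i)
  · rintro rfl
    simpa using nuStar_smul hA hν2 0 0

lemma nuStar_mono (hA : ∀ f ∈ A, IsSubaddMonoHom f)
    (hB : ∀ x : Fin n → ℝ, BddAbove ((fun g => ν (g fun i => |x i|)) '' famStar A))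
    (hν5 : ∀ x y : Fin n → ℝ, (∀ i, 0 ≤ x i) → (∀ i, x i ≤ y i) → ν x ≤ ν y)
    {x y : Fin n → ℝ} (hx : 0 ≤ x) (hxy : x ≤ y) : nuStar A ν x ≤ nuStar A ν y := by
  have hax : (fun i => |x i|) = x := funext fun i => abs_of_nonneg (hx i)
  have hay : (fun i => |y i|) = y := funext fun i => abs_of_nonneg (hx.trans hxy i)
  refine nuStar_le fun g hg => ?_
  have hgy := le_nuStar (hB y) hg
  rw [hay] at hgy
  rw [hax]
  have hg' := isSubaddMonoHom_of_mem_famStar hA hg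
  exact (hν5 _ _ (hg'.map_nonneg x hx) (hg'.mono x y hx hxy)).trans hgy

lemma nuStar_map_le (hA : ∀ f ∈ A, IsSubaddMonoHom f)
    (hB : ∀ x : Fin n → ℝ, BddAbove ((fun g => ν (g fun i => |x i|)) '' famStar A))
    {f : (Fin n → ℝ) → Fin n → ℝ} (hf : f ∈ A) {x : Fin n → ℝ} (hx : 0 ≤ x) :
    nuStar A ν (f x) ≤ nuStar A ν x := by
  have hax : (fun i => |x i|) = x := funext fun i => abs_of_nonneg (hx i)
  have hafx : (fun i => |f x i|) = f x :=
    funext fun i => abs_of_nonneg ((hA f hf).map_nonneg x hx i)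
  refine nuStar_le fun g hg => ?_
  have hgf := le_nuStar (hB x) (comp_mem_famStar hg hf)
  rw [hax] at hgf
  rw [hafx]
  exact hgf

end NuStar

theorem statement14 {n : ℕ} (A : Set ((Fin n → ℝ) → Fin n → ℝ))
    (hA : ∀ f ∈ A, HomogOn f (stdCone n) ∧ OrderPresOn f (stdCone n) ∧
      SubaddOn f (stdCone n))
    (hbdd : BoundedFamOn A (stdCone n))
    (hirr : IrreducibleFam A)
    (hr : jointRad A (stdCone n) = 1)
    (ν : (Fin n → ℝ) → ℝ)
    (hν1 : ∀ x y, ν (x + y) ≤ ν x + ν y)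
    (hν2 : ∀ (c : ℝ) (x), ν (c • x) = |c| * ν x)
    (hν3 : ∀ x, ν x = 0 ↔ x = 0)
    (hν4 : ∀ x, 0 ≤ ν x)
    (hν5 : ∀ x y : Fin n → ℝ, (∀ i, 0 ≤ x i) → (∀ i, x i ≤ y i) → ν x ≤ ν y) :
    (∀ x y, nuStar A ν (x + y) ≤ nuStar A ν x + nuStar A ν y) ∧
    (∀ (c : ℝ) (x), nuStar A ν (c • x) = |c| * nuStar A ν x) ∧
    (∀ x, nuStar A ν x = 0 ↔ x = 0) ∧
    (∀ x, 0 ≤ nuStar A ν x) ∧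
    (∀ x y : Fin n → ℝ, (∀ i, 0 ≤ x i) → (∀ i, x i ≤ y i) →
      nuStar A ν x ≤ nuStar A ν y) ∧
    (∀ f ∈ A, ∀ x ∈ stdCone n,
      nuStar A ν (f x) ≤ jointRad A (stdCone n) * nuStar A ν x) := by
  have hA' : ∀ f ∈ A, IsSubaddMonoHom f := fun f hf => isSubaddMonoHom_of_stdCone (hA f hf)
  obtain ⟨K, hK0, hK⟩ := exists_le_mul_norm_of_subadditive hν1 hν2 hν4
  have hB : ∀ x : Fin n → ℝ, BddAbove ((fun g => ν (g fun i => |x i|)) '' famStar A) :=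
    fun x => bddAbove_image_of_bddOrbit hK0 hK
      (bddOrbit_of_irreducible hA' hbdd hirr hr.le fun i => abs_nonneg (x i))
  refine ⟨nuStar_add_le hA' hB hν1 hν5, nuStar_smul hA' hν2,
    nuStar_eq_zero_iff hA' hB hν2 hν3 hν4, nuStar_nonneg hν4,
    fun x y hx hxy => nuStar_mono hA' hB hν5 hx hxy, fun f hf x hx => ?_⟩
  rw [hr, one_mul]
  exact nuStar_map_le hA' hB hf hx
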